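/- If a partition λ has the stair-step property with landing number L(λ) ≤ 2, then ψ₂λ is well-defined, has the stair-step property, and satisfies L(ψ₂λ) ≤ 2. -/

import Mathlib

/-- A partition, represented as its Young diagram: the weakly decreasing list of
(positive) row lengths, row `0` being the bottom (longest) row. -/
structure YPartition where
  rows : List ℕ
  sorted : rows.Pairwise (· ≥ ·)
  pos : ∀ x ∈ rows, 0 < x

namespace YPartition

/-- The number of boxes of the diagram. -/
def size (p : YPartition) : ℕ := p.rows.sum

/-- The length of row `i` (zero for rows above the diagram). -/
def row (p : YPartition) (i : ℕ) : ℕ := p.rows.getD i 0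

/-- The height `k` of the first column, i.e. the number of rows. -/
def colHeight (p : YPartition) : ℕ := p.rows.length

/-- The length `j` of the first (bottom) row. -/
def rowLen (p : YPartition) : ℕ := p.row 0

/-- The height of column `c` (columns indexed from `0`). -/
def colH (p : YPartition) (c : ℕ) : ℕ :=
  ((Finset.range p.colHeight).filter (fun r => c < p.row r)).card

/-- The arm of the box in row `r` and column `c`: the number of boxes strictly
above it in its column. -/
def arm (p : YPartition) (r c : ℕ) : ℕ :=
  ((Finset.Ioo r p.colHeight).filter (fun r' => c < p.row r')).card

/-- The leg of the box in row `r` and column `c`: the number of boxes strictly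
to its right in its row. -/
def leg (p : YPartition) (r c : ℕ) : ℕ := p.row r - 1 - c

/-- The boxes of the diagram, as (row, column) pairs. -/
def cells (p : YPartition) : Finset (ℕ × ℕ) :=
  (Finset.range p.colHeight ×ˢ Finset.range p.rowLen).filter (fun b => b.2 < p.row b.1)

/-- `w̃t(λ) = #{□ ∈ λ : a(□) + 1 ≡ l(□) (mod 3)}`. -/
def wtt (p : YPartition) : ℕ :=
  (p.cells.filter (fun b => (p.arm b.1 b.2 + 1) % 3 = p.leg b.1 b.2 % 3)).card

/-- `wt(λ) = #{□ ∈ λ : l(□) > 1 and a(□) + 1 ≡ l(□) (mod 3)}`. -/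
def wt (p : YPartition) : ℕ :=
  (p.cells.filter (fun b => 1 < p.leg b.1 b.2 ∧ (p.arm b.1 b.2 + 1) % 3 = p.leg b.1 b.2 % 3)).card

/-- A list of naturals is (the row list of) a well-defined Young diagram iff
it is weakly decreasing with positive entries. -/
def IsYD (l : List ℕ) : Prop := l.Pairwise (· ≥ ·) ∧ ∀ x ∈ l, 0 < x

instance (l : List ℕ) : Decidable (IsYD l) := by unfold IsYD; exact inferInstance

/-- The empty partition. -/
def emptyP : YPartition := ⟨[], List.Pairwise.nil, by simp⟩

/-- The row list of `ρ₁λ`: remove the first row (length `j`), add one box to it,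
and insert the resulting `j + 1` boxes as a new first column. -/
def rho1Rows (p : YPartition) : List ℕ :=
  (List.range (p.rowLen + 1)).map
    (fun i => p.rows.tail.getD i 0 + 1)

/-- The row list of `ψ₂λ`: remove the first column (height `k`), add two boxes
to it, and insert the resulting `k + 2` boxes as a new first row. -/
def psi2Rows (p : YPartition) : List ℕ :=
  (p.colHeight + 2) :: (p.rows.map (· - 1)).filter (fun x => decide (0 < x))

/-- `ρ₁`, as a partially defined map: defined exactly when the new first column
(height `j + 1`) is at least as high as the rest of the diagram (height `k - 1`),
i.e. when `j ≥ k - 2`. -/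
def rho1? (p : YPartition) : Option YPartition :=
  if h : p.colHeight ≤ p.rowLen + 2 ∧ IsYD (rho1Rows p)
  then some ⟨rho1Rows p, h.2.1, h.2.2⟩ else none

/-- `ψ₂`, as a partially defined map: defined exactly when the result is a
well-defined Young diagram, i.e. when `j ≤ k + 3`. -/
def psi2? (p : YPartition) : Option YPartition :=
  if h : IsYD (psi2Rows p) then some ⟨psi2Rows p, h.1, h.2⟩ else none

/-- Apply `ρ₁` (for `a = 1`) or `ψ₂` (for `a = 2`). -/
def step (a : ℕ) (p : YPartition) : Option YPartition :=
  if a = 1 then rho1? p else psi2? p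

/-- Apply a `{1,2}`-word to the empty partition, the leftmost entry being the
first map applied. -/
def applyWord (w : List ℕ) : Option YPartition :=
  w.foldlM (fun p a => step a p) emptyP

end YPartition

namespace YPartition

/-- The stair-step property: consecutive column heights decrease by at most one
(here `colH rowLen = 0`, so in particular the last column has height `1`). -/
def StairStep (p : YPartition) : Prop :=
  ∀ i < p.rowLen, p.colH i ≤ p.colH (i + 1) + 1

/-- The landing number: the number of indices `i` with `cᵢ = c_{i+1}`. -/
def landing (p : YPartition) : ℕ :=
  ((Finset.range p.rowLen).filter
    (fun i => i + 1 < p.rowLen ∧ p.colH i = p.colH (i + 1))).card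

end YPartition

namespace YPartition

lemma aux_card_filter_range (n : ℕ) (Q : ℕ → Prop) [DecidablePred Q] :
    ((Finset.range n).filter Q).card = (List.range n).countP (fun i => decide (Q i)) := by
  simp [Finset.filter, Finset.card, Finset.range, Multiset.range, Multiset.filter_coe,
    List.countP_eq_length_filter]

lemma aux_countP_range_getD (l : List ℕ) (P : ℕ → Prop) [DecidablePred P] :
    (List.range l.length).countP (fun r => decide (P (l.getD r 0)))
      = l.countP (fun x => decide (P x)) := by
  induction l with
  | nil => simp
  | cons a t ih =>
    rw [List.length_cons, List.range_succ_eq_map, List.countP_cons, List.countP_map]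
    rw [List.countP_cons, ← ih]
    simp [Function.comp_def]

lemma colH_countP (p : YPartition) (c : ℕ) :
    p.colH c = p.rows.countP (fun x => decide (c < x)) := by
  unfold colH colHeight row
  rw [aux_card_filter_range, aux_countP_range_getD]

lemma colH_zero (p : YPartition) : p.colH 0 = p.colHeight := by
  rw [colH_countP]
  unfold colHeight
  rw [List.countP_eq_length]
  intro a ha
  simpa using p.pos a ha

lemma colH_anti (p : YPartition) {c d : ℕ} (h : c ≤ d) : p.colH d ≤ p.colH c := by
  rw [colH_countP, colH_countP]
  apply List.countP_mono_left
  intro x _ hx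
  simp only [decide_eq_true_eq] at *
  omega

lemma mem_le_rowLen (p : YPartition) : ∀ x ∈ p.rows, x ≤ p.rowLen := by
  intro x hx
  unfold rowLen row
  cases h : p.rows with
  | nil => simp [h] at hx
  | cons a t =>
    rw [h] at hx
    have hs := p.sorted; rw [h] at hs
    rcases List.mem_cons.mp hx with rfl | hxt
    · simp
    · simpa using List.rel_of_pairwise_cons hs hxt

lemma colH_eq_zero (p : YPartition) {c : ℕ} (h : p.rowLen ≤ c) : p.colH c = 0 := by
  rw [colH_countP, List.countP_eq_zero]
  intro a ha
  have := mem_le_rowLen p a ha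
  simp only [decide_eq_true_eq]
  omega

lemma colH_pos (p : YPartition) {c : ℕ} (h : c < p.rowLen) : 0 < p.colH c := by
  rw [colH_countP, List.countP_pos_iff]
  have hne : p.rows ≠ [] := by
    intro he
    unfold rowLen row at h
    rw [he] at h
    simp at h
  obtain ⟨a, t, hr⟩ := List.exists_cons_of_ne_nil hne
  rw [hr]
  refine ⟨a, List.mem_cons_self, ?_⟩
  unfold rowLen row at h
  rw [hr] at h
  simpa using h

lemma stair_all (p : YPartition) (hs : StairStep p) :
    ∀ c, p.colH c ≤ p.colH (c + 1) + 1 := by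
  intro c
  by_cases h : c < p.rowLen
  · exact hs c h
  · rw [colH_eq_zero p (le_of_not_gt h)]
    omega

lemma count_key (f : ℕ → ℕ) (hmono : ∀ i, f (i + 1) ≤ f i)
    (hst : ∀ i, f i ≤ f (i + 1) + 1) (n : ℕ) :
    ((Finset.range n).filter (fun i => f i = f (i + 1))).card + f 0 = n + f n := by
  induction n with
  | zero => simp
  | succ n ih =>
    rw [Finset.range_add_one, Finset.filter_insert]
    by_cases h : f n = f (n + 1)
    · rw [if_pos h, Finset.card_insert_of_notMem (by simp)]
      omega
    · rw [if_neg h]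
      have h1 := hmono n
      have h2 := hst n
      omega

lemma landing_eq (p : YPartition) (hs : StairStep p) :
    p.landing + p.colHeight = p.rowLen := by
  have key := count_key p.colH (fun i => colH_anti p (Nat.le_succ i)) (stair_all p hs) p.rowLen
  rw [colH_zero, colH_eq_zero p (le_refl _)] at key
  have hland : p.landing
      = ((Finset.range p.rowLen).filter (fun i => p.colH i = p.colH (i + 1))).card := by
    unfold landing
    congr 1
    apply Finset.filter_congr
    intro i hi
    simp only [Finset.mem_range] at hi
    constructor
    · rintro ⟨-, h⟩; exact h
    · intro h
      refine ⟨?_, h⟩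
      by_contra hle
      have hi1 : i + 1 = p.rowLen := by omega
      have hp := colH_pos p hi
      rw [h, hi1, colH_eq_zero p (le_refl _)] at hp
      omega
  omega

end YPartition

open YPartition in
/-- if `λ` has the stair-step property with `L(λ) ≤ 2`, then
`ψ₂λ` is well-defined, has the stair-step property, and `L(ψ₂λ) ≤ 2`. -/
theorem psi2_preserves_stairstep (p : YPartition)
    (hs : StairStep p) (hl : p.landing ≤ 2) :
    ∃ q, psi2? p = some q ∧ StairStep q ∧ q.landing ≤ 2 := by
  have hjk := landing_eq p hs
  set k := p.colHeight with hk
  have hj2 : p.rowLen ≤ k + 2 := by omega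
  set L := (p.rows.map (· - 1)).filter (fun x => decide (0 < x)) with hL
  have hmemL : ∀ x ∈ L, x ≤ k + 1 := by
    intro x hx
    rw [hL, List.mem_filter] at hx
    obtain ⟨hx1, hx2⟩ := hx
    obtain ⟨y, hy, rfl⟩ := List.mem_map.mp hx1
    have := mem_le_rowLen p y hy
    omega
  have hLsorted : L.Pairwise (· ≥ ·) := by
    apply List.Pairwise.sublist List.filter_sublist
    exact List.Pairwise.map (· - 1) (fun a b h => Nat.sub_le_sub_right h 1) p.sorted
  have hYD : IsYD (psi2Rows p) := by
    constructor
    · rw [psi2Rows, List.pairwise_cons]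
      exact ⟨fun b hb => by have := hmemL b hb; omega, hLsorted⟩
    · intro x hx
      rw [psi2Rows, List.mem_cons] at hx
      rcases hx with rfl | hx
      · omega
      · rw [List.mem_filter] at hx
        simpa using hx.2
  set q : YPartition := ⟨psi2Rows p, hYD.1, hYD.2⟩ with hqdef
  have hqrows : q.rows = (k + 2) :: L := rfl
  have hqlen : q.rowLen = k + 2 := rfl
  have hq : ∀ c, q.colH c = p.colH (c + 1) + (if c < k + 2 then 1 else 0) := by
    intro c
    rw [colH_countP, colH_countP, hqrows, List.countP_cons, hL, List.countP_filter,
        List.countP_map]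
    have hcongr : p.rows.countP ((fun x => decide (c < x) && decide (0 < x)) ∘ (· - 1))
        = p.rows.countP (fun x => decide (c + 1 < x)) := by
      apply List.countP_congr
      intro a _
      simp only [Function.comp_apply, Bool.and_eq_true, decide_eq_true_eq]
      constructor <;> omega
    rw [hcongr]
    by_cases h : c < k + 2 <;> simp [h]
  have hsq : StairStep q := by
    intro i hi
    rw [hqlen] at hi
    rw [hq i, hq (i + 1)]
    by_cases h1 : i + 1 < k + 2
    · have h2 := stair_all p hs (i + 1)
      simp only [if_pos (show i < k + 2 by omega), if_pos h1]
      omega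
    · have h0 : p.colH (i + 1) = 0 := colH_eq_zero p (by omega)
      simp only [if_pos (show i < k + 2 by omega), if_neg h1]
      omega
  refine ⟨q, ?_, hsq, ?_⟩
  · unfold psi2?
    rw [dif_pos hYD]
  · have hle := landing_eq q hsq
    have hqk : q.colHeight = p.colH 1 + 1 := by
      rw [← colH_zero q, hq 0]
      simp
    have h1 : k ≤ p.colH 1 + 1 := by
      by_cases hj0 : 0 < p.rowLen
      · have h2 : p.colH 0 ≤ p.colH 1 + 1 := hs 0 hj0
        rw [colH_zero] at h2
        omega
      · omega
    rw [hqlen, hqk] at hle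
    omega
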